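/- Let n ≥ 5 and 2 ≤ k ≤ n−1, let s, p, t form a triangle in the k-tree G(𝒯), and let C be the Type B 4-cycle with vertex set {u, u·(s p), u·(s p)·(p t), u·(s t)} for a vertex u of T_kG_n. Then the neighborhood F = N(C) of C (the set of vertices outside C adjacent to some vertex of C) has cardinality exactly 4(kn − k(k+1)/2) − 10, and F is an R_2-vertex-cut of T_kG_n. -/

import Mathlib

/-- The transposition generating graph `G(𝒯)` of a set `T` of transpositions of `Sym(n)`:
vertices `{1,…,n}` (modeled as `Fin n`), with an edge `i j` iff the transposition
`(i j)` belongs to `T`. -/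
def transGraph {n : ℕ} (T : Set (Equiv.Perm (Fin n))) : SimpleGraph (Fin n) :=
  SimpleGraph.fromRel (fun i j => Equiv.swap i j ∈ T)

/-- The Cayley graph `Cay(Sym(n), T)`: vertices are permutations, and `g, h` are
adjacent iff `h = g * t` for some `t ∈ T`. -/
def cayley {n : ℕ} (T : Set (Equiv.Perm (Fin n))) : SimpleGraph (Equiv.Perm (Fin n)) :=
  SimpleGraph.fromRel (fun g h => ∃ t ∈ T, h = g * t)

/-- `G` is a `k`-tree: there is a construction ordering of the vertices in which the
first `k+1` vertices are mutually adjacent, and each later vertex is joined to exactly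
`k` mutually adjacent earlier vertices. -/
def IsKTree (k : ℕ) {V : Type*} [Fintype V] (G : SimpleGraph V) : Prop :=
  k + 1 ≤ Fintype.card V ∧
  ∃ e : Fin (Fintype.card V) ≃ V,
    (∀ i j : Fin (Fintype.card V), j < i → (i : ℕ) ≤ k → G.Adj (e i) (e j)) ∧
    ∀ i : Fin (Fintype.card V), k + 1 ≤ (i : ℕ) →
      {j : Fin (Fintype.card V) | j < i ∧ G.Adj (e i) (e j)}.ncard = k ∧
      {j : Fin (Fintype.card V) | j < i ∧ G.Adj (e i) (e j)}.Pairwise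
        (fun j₁ j₂ => G.Adj (e j₁) (e j₂))

/-- `F` is an `R_k`-vertex-cut of `G`: `G - F` is disconnected and every vertex of
`G - F` has at least `k` neighbors in `G - F`. -/
def IsRkCut {V : Type*} (G : SimpleGraph V) (k : ℕ) (F : Set V) : Prop :=
  ¬ (G.induce (Fᶜ : Set V)).Connected ∧
  ∀ v : V, v ∉ F → k ≤ {u : V | u ∉ F ∧ G.Adj v u}.ncard

/-- The `R_k`-vertex-connectivity `κ^k(G)`: the minimum cardinality of an
`R_k`-vertex-cut of `G`. -/
noncomputable def rkConn {V : Type*} (G : SimpleGraph V) (k : ℕ) : ℕ :=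
  sInf {m : ℕ | ∃ F : Set V, IsRkCut G k F ∧ F.ncard = m}

/-!
Write `a = (s p)`, `b = (p t)`, `c = (s t)` and `m = |𝒯|`; counting the edges of the `k`-tree
along its construction order gives `m = kn - k(k+1)/2`. Cayley neighbours have opposite signs,
so `N(u) ∪ N(uab)` and `N(ua) ∪ N(uc)` are disjoint; together they make up `C ∪ N(C)`. The
common neighbours of `g` and `gσ` are the `gx` with `x, σ⁻¹x ∈ 𝒯`; for `σ = ab` or `σ = ac`,
an even permutation supported on `{s, p, t}`, these `x` are exactly `a, b, c`. Hence each union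
has `2m - 3` elements and `|N(C)| = 2(2m - 3) - 4`.

Every edge leaving `C` ends in `N(C)`, and `|C ∪ N(C)| ≤ 4m < n!`, so removing `N(C)` separates
`C` from the rest. A vertex of `C` keeps its two neighbours on the cycle. The neighbours of a
vertex `v ∉ C` meet only one of the two unions, `N(g) ∪ N(gτ)` with `g` of the sign of `v` and
`τ ∈ {ab, ac}`. If `vx` lies there, `x` is a right factor of `g⁻¹v` or of `τ⁻¹g⁻¹v` in a
product of two transpositions. A permutation has at most three such factors, and two `3`-cycles
differing by a `3`-cycle share one, so at most `5` of the `m ≥ 7` neighbours of `v` are lost.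
-/

open Equiv Equiv.Perm Finset
open scoped Pointwise

namespace Equiv.Perm

variable {α : Type*} [DecidableEq α]

theorem IsSwap.mul_self {x : Perm α} (hx : x.IsSwap) : x * x = 1 := by
  obtain ⟨i, j, -, rfl⟩ := hx
  exact swap_mul_self i j

theorem IsSwap.inv_eq {x : Perm α} (hx : x.IsSwap) : x⁻¹ = x :=
  inv_eq_of_mul_eq_one_right hx.mul_self

theorem IsSwap.eq_swap_apply {x : Perm α} (hx : x.IsSwap) {i : α} (hi : x i ≠ i) :
    x = swap i (x i) := by
  obtain ⟨a, b, -, rfl⟩ := hx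
  rcases eq_or_ne i a with rfl | hia
  · simp
  rcases eq_or_ne i b with rfl | hib
  · simp [swap_comm]
  · simp [swap_apply_of_ne_of_ne hia hib] at hi

theorem IsSwap.eq_swap_of_apply_ne {x : Perm α} (hx : x.IsSwap) {i j : α} (hij : i ≠ j)
    (hi : x i ≠ i) (hj : x j ≠ j) : x = swap i j := by
  have hx' := hx.eq_swap_apply hi
  suffices x i = j by rwa [this] at hx'
  by_contra h
  rw [hx', swap_apply_of_ne_of_ne hij.symm (Ne.symm h)] at hj
  exact hj rfl

/-- The right factors `x` of the factorizations `σ = (σ * x) * x` into two transpositions. -/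
def rightSwapFactors (σ : Perm α) : Set (Perm α) :=
  {x | x.IsSwap ∧ (σ * x).IsSwap}

theorem setOf_mem_mul_mem_subset_rightSwapFactors {T : Set (Perm α)} (hT : ∀ x ∈ T, x.IsSwap)
    (σ : Perm α) : {x ∈ T | σ * x ∈ T} ⊆ rightSwapFactors σ :=
  fun _ hx => ⟨hT _ hx.1, hT _ hx.2⟩

theorem exists_eq_swap_apply_of_mem_rightSwapFactors {σ x : Perm α} (hσ : σ ≠ 1)
    (hx : x ∈ rightSwapFactors σ) : ∃ i, σ i ≠ i ∧ x = swap i (σ i) := by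
  obtain ⟨⟨i, j, hij, rfl⟩, hy⟩ := hx
  have hσi : σ i = (σ * swap i j) j := by simp
  have hσj : σ j = (σ * swap i j) i := by simp
  by_cases hyj : (σ * swap i j) j = j
  · exact ⟨i, by rw [hσi, hyj]; exact hij.symm, by rw [hσi, hyj]⟩
  by_cases hyi : (σ * swap i j) i = i
  · exact ⟨j, by rw [hσj, hyi]; exact hij, by rw [hσj, hyi, swap_comm]⟩
  -- otherwise `σ * swap i j` moves both `i` and `j`, so it is `swap i j` and `σ = 1`
  exact absurd (mul_eq_right.1 (hy.eq_swap_of_apply_ne hij hyi hyj)) hσ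

theorem rightSwapFactors_subset_pair_of_disjoint {σ x : Perm α} (hσ : σ ≠ 1)
    (hx : x ∈ rightSwapFactors σ) (hd : Disjoint x (σ * x)) :
    rightSwapFactors σ ⊆ {x, σ * x} := by
  intro x' hx'
  obtain ⟨i, hi, rfl⟩ := exists_eq_swap_apply_of_mem_rightSwapFactors hσ hx'
  by_cases hxi : x i = i
  · have h : σ i = (σ * x) i := by rw [mul_apply, hxi]
    rw [h] at hi ⊢
    exact Or.inr (hx.2.eq_swap_apply hi).symm
  · have h : σ i = x i := by
      have hxx : x (x i) = i := by rw [← mul_apply, hx.1.mul_self, one_apply]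
      have hy : (σ * x) (x i) = x i :=
        (hd (x i)).resolve_left fun h => hxi (by rwa [hxx, eq_comm] at h)
      rwa [mul_apply, hxx] at hy
    rw [h]
    exact Or.inl (hx.1.eq_swap_apply hxi).symm

variable [Fintype α]

theorem rightSwapFactors_subset_image {σ : Perm α} (hσ : σ ≠ 1) :
    rightSwapFactors σ ⊆ ↑(σ.support.image fun i => swap i (σ i)) := by
  intro x hx
  obtain ⟨i, hi, rfl⟩ := exists_eq_swap_apply_of_mem_rightSwapFactors hσ hx
  exact mem_coe.2 (mem_image_of_mem _ (mem_support.2 hi))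

theorem support_subset_of_mem_rightSwapFactors {σ x : Perm α} (hσ : σ ≠ 1)
    (hx : x ∈ rightSwapFactors σ) : x.support ⊆ σ.support := by
  obtain ⟨i, hi, rfl⟩ := exists_eq_swap_apply_of_mem_rightSwapFactors hσ hx
  rw [support_swap (Ne.symm hi)]
  intro z hz
  rcases mem_insert.1 hz with rfl | hz
  · exact mem_support.2 hi
  · rw [mem_singleton.1 hz]
    exact apply_mem_support.2 (mem_support.2 hi)

theorem ncard_rightSwapFactors_le {σ : Perm α} (hσ : σ ≠ 1) :
    (rightSwapFactors σ).ncard ≤ #σ.support :=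
  (Set.ncard_le_ncard (rightSwapFactors_subset_image hσ)).trans
    ((Set.ncard_coe_finset _).trans_le card_image_le)

/-- The two alternatives are the products of two disjoint transpositions and the `3`-cycles. -/
theorem ncard_rightSwapFactors_le_two_or_card_support_le_three {σ : Perm α} (hσ : σ ≠ 1) :
    (rightSwapFactors σ).ncard ≤ 2 ∨ #σ.support ≤ 3 := by
  rcases (rightSwapFactors σ).eq_empty_or_nonempty with h | ⟨x, hx⟩
  · simp [h]
  by_cases hd : Disjoint x (σ * x)
  · left
    calc (rightSwapFactors σ).ncard ≤ ({x, σ * x} : Set (Perm α)).ncard :=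
          Set.ncard_le_ncard (rightSwapFactors_subset_pair_of_disjoint hσ hx hd)
      _ ≤ 2 := (Set.ncard_insert_le _ _).trans (by simp)
  · right
    rw [disjoint_iff_disjoint_support, Finset.not_disjoint_iff_nonempty_inter] at hd
    have hσ' : σ = σ * x * x := by rw [mul_assoc, hx.1.mul_self, mul_one]
    have hunion := card_union_add_card_inter (σ * x).support x.support
    rw [card_support_eq_two.2 hx.1, card_support_eq_two.2 hx.2, inter_comm] at hunion
    calc #σ.support ≤ #((σ * x).support ∪ x.support) := by
          conv_lhs => rw [hσ']
          exact card_le_card (support_mul_le _ _)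
      _ ≤ 3 := by have := card_pos.2 hd; omega

theorem ncard_rightSwapFactors_le_three {σ : Perm α} (hσ : σ ≠ 1) :
    (rightSwapFactors σ).ncard ≤ 3 :=
  (ncard_rightSwapFactors_le_two_or_card_support_le_three hσ).elim (fun h => h.trans (by norm_num))
    (fun h => (ncard_rightSwapFactors_le hσ).trans h)

theorem apply_eq_or_apply_eq_of_card_support_eq_three {σ : Perm α} (h3 : #σ.support = 3)
    {i j : α} (hi : i ∈ σ.support) (hj : j ∈ σ.support) (hij : i ≠ j) :
    σ i = j ∨ σ j = i := by
  by_contra! h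
  have hmem :
      ∀ k ∈ σ.support, σ k ≠ i → σ k ≠ j → σ k ∈ (σ.support.erase i).erase j :=
    fun k hk hki hkj => mem_erase.2 ⟨hkj, mem_erase.2 ⟨hki, apply_mem_support.2 hk⟩⟩
  have hcard : #((σ.support.erase i).erase j) = 1 := by
    rw [card_erase_of_mem (mem_erase.2 ⟨hij.symm, hj⟩), card_erase_of_mem hi, h3]
  have := card_le_one.1 hcard.le _ (hmem i hi (mem_support.1 hi) h.1) _
    (hmem j hj h.2 (mem_support.1 hj))
  exact hij (σ.injective this)

theorem swap_mem_image_of_card_support_eq_three {σ : Perm α} (h3 : #σ.support = 3)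
    {i j : α} (hi : i ∈ σ.support) (hj : j ∈ σ.support) (hij : i ≠ j) :
    swap i j ∈ σ.support.image fun k => swap k (σ k) := by
  rcases apply_eq_or_apply_eq_of_card_support_eq_three h3 hi hj hij with h | h
  · exact mem_image.2 ⟨i, hi, by rw [h]⟩
  · exact mem_image.2 ⟨j, hj, by rw [h, swap_comm]⟩

theorem card_sdiff_support_add_card_sdiff_support_le (f g : Perm α) :
    #(f.support \ g.support) + #(g.support \ f.support) ≤ #(g * f⁻¹).support := by
  rw [← card_union_of_disjoint disjoint_sdiff_sdiff]
  refine card_le_card fun z hz => ?_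
  rw [mem_support, mul_apply]
  rcases mem_union.1 hz with hz | hz <;> obtain ⟨hz₁, hz₂⟩ := mem_sdiff.1 hz <;>
    rw [mem_support] at hz₁ hz₂ <;> rw [not_not] at hz₂
  · exact fun h => hz₁ (inv_eq_iff_eq.1 (g.injective (h.trans hz₂.symm))).symm
  · rwa [inv_eq_iff_eq.2 hz₂.symm]

/-- If `ρ` and `ρ'` are `3`-cycles differing by a permutation of support at most three, their
supports share two points `i`, `j`, and `swap i j` is a factor of both. -/
theorem ncard_rightSwapFactors_union_le_five {ρ ρ' : Perm α} (hρ : ρ ≠ 1) (hρ' : ρ' ≠ 1)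
    (h : #(ρ' * ρ⁻¹).support ≤ 3) :
    (rightSwapFactors ρ ∪ rightSwapFactors ρ').ncard ≤ 5 := by
  have hunion := Set.ncard_union_le (rightSwapFactors ρ) (rightSwapFactors ρ')
  have hle := ncard_rightSwapFactors_le hρ
  have hle' := ncard_rightSwapFactors_le hρ'
  have h3' := ncard_rightSwapFactors_le_three hρ'
  rcases ncard_rightSwapFactors_le_two_or_card_support_le_three hρ with hA | hA
  · omega
  rcases ncard_rightSwapFactors_le_two_or_card_support_le_three hρ' with hB | hB
  · omega
  by_cases hsmall : #ρ.support ≤ 2 ∨ #ρ'.support ≤ 2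
  · omega
  have hA3 : #ρ.support = 3 := by omega
  have hB3 : #ρ'.support = 3 := by omega
  have hinter : 1 < #(ρ.support ∩ ρ'.support) := by
    have := card_sdiff_support_add_card_sdiff_support_le ρ ρ'
    rw [card_sdiff, card_sdiff, inter_comm ρ'.support] at this
    omega
  obtain ⟨i, hi, j, hj, hij⟩ := one_lt_card.1 hinter
  rw [mem_inter] at hi hj
  set P := ρ.support.image fun k => swap k (ρ k)
  set P' := ρ'.support.image fun k => swap k (ρ' k)
  have hcommon : 0 < #(P ∩ P') := card_pos.2 ⟨swap i j, mem_inter.2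
    ⟨swap_mem_image_of_card_support_eq_three hA3 hi.1 hj.1 hij,
      swap_mem_image_of_card_support_eq_three hB3 hi.2 hj.2 hij⟩⟩
  calc (rightSwapFactors ρ ∪ rightSwapFactors ρ').ncard
        ≤ ((P ∪ P' : Finset (Perm α)) : Set (Perm α)).ncard := by
        rw [coe_union]
        exact Set.ncard_le_ncard (Set.union_subset_union (rightSwapFactors_subset_image hρ)
          (rightSwapFactors_subset_image hρ'))
    _ ≤ 5 := by
        have := card_union_add_card_inter P P'
        have : #P ≤ 3 := card_image_le.trans hA3.le
        have : #P' ≤ 3 := card_image_le.trans hB3.le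
        rw [Set.ncard_coe_finset]
        omega

theorem support_swap_subset (i j : α) : (swap i j).support ⊆ {i, j} := by
  intro z hz
  by_contra h
  simp only [mem_insert, mem_singleton, not_or] at h
  exact (mem_support.1 hz) (swap_apply_of_ne_of_ne h.1 h.2)

theorem isSwap_of_sign_eq_neg_one {σ : Perm α} (hσ : sign σ = -1) (h3 : #σ.support ≤ 3) :
    σ.IsSwap := by
  refine card_support_eq_two.1 ?_
  interval_cases h : #σ.support
  · rw [card_eq_zero, support_eq_empty_iff] at h
    simp [h] at hσ
  · exact absurd h (card_support_ne_one σ)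
  · rfl
  · rw [(card_support_eq_three_iff.1 h).sign] at hσ
    exact absurd hσ (by decide)

end Equiv.Perm

section Triangle

variable {α : Type*} [DecidableEq α]

def triangleSwaps (s p t : α) : Set (Perm α) :=
  {swap s p, swap p t, swap s t}

variable {s p t : α}

theorem swap_ne_swap_of_ne {i j k : α} (hjk : j ≠ k) : swap i j ≠ swap i k := by
  intro h
  have := congr($h i)
  simp only [swap_apply_left] at this
  exact hjk this

theorem ncard_triangleSwaps (hsp : s ≠ p) (hpt : p ≠ t) (hst : s ≠ t) :
    (triangleSwaps s p t).ncard = 3 := by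
  refine Set.ncard_eq_three.2 ⟨_, _, _, ?_, swap_ne_swap_of_ne hpt, ?_, rfl⟩
  · rw [swap_comm s p]; exact swap_ne_swap_of_ne hst
  · rw [swap_comm p t, swap_comm s t]; exact swap_ne_swap_of_ne hsp.symm

theorem swap_mul_swap_ne_one (hst : s ≠ t) : swap s p * swap p t ≠ 1 := by
  rw [Ne, mul_eq_one_iff_eq_inv, swap_inv, swap_comm s p]
  exact swap_ne_swap_of_ne hst

theorem swap_mul_swap_mul_swap_eq (hpt : p ≠ t) (hst : s ≠ t) :
    swap s p * swap p t * swap s p = swap s t := by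
  rw [swap_comm s p, swap_comm p t]
  exact swap_mul_swap_mul_swap hpt.symm hst.symm

variable [Fintype α]

theorem support_subset_of_mem_triangleSwaps {x : Perm α} (hx : x ∈ triangleSwaps s p t) :
    x.support ⊆ {s, p, t} := by
  rcases hx with rfl | rfl | rfl <;> refine (support_swap_subset _ _).trans fun z => ?_ <;>
    simp only [mem_insert, mem_singleton] <;> tauto

theorem mem_triangleSwaps_of_isSwap {x : Perm α} (hx : x.IsSwap) (h : x.support ⊆ {s, p, t}) :
    x ∈ triangleSwaps s p t := by
  obtain ⟨i, j, hij, rfl⟩ := hx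
  rw [support_swap hij, insert_subset_iff, singleton_subset_iff] at h
  simp only [mem_insert, mem_singleton] at h
  obtain ⟨hi, hj⟩ := h
  rcases hi with rfl | rfl | rfl <;> rcases hj with rfl | rfl | rfl <;>
    simp_all [triangleSwaps, swap_comm]

theorem support_mul_subset_of_mem_triangleSwaps {x y : Perm α} (hx : x ∈ triangleSwaps s p t)
    (hy : y ∈ triangleSwaps s p t) : (x * y).support ⊆ {s, p, t} :=
  (support_mul_le x y).trans
    (union_subset (support_subset_of_mem_triangleSwaps hx) (support_subset_of_mem_triangleSwaps hy))

theorem setOf_mem_mul_mem_eq_triangleSwaps {T : Set (Perm α)} (hT : ∀ x ∈ T, x.IsSwap)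
    (htri : triangleSwaps s p t ⊆ T) {σ : Perm α} (hσ : σ ≠ 1) (hsign : sign σ = 1)
    (hsupp : σ.support ⊆ {s, p, t}) : {x ∈ T | σ * x ∈ T} = triangleSwaps s p t := by
  ext x
  constructor
  · rintro ⟨hxT, hσx⟩
    exact mem_triangleSwaps_of_isSwap (hT x hxT)
      ((support_subset_of_mem_rightSwapFactors hσ ⟨hT x hxT, hT _ hσx⟩).trans hsupp)
  · intro hx
    have hσx_supp : (σ * x).support ⊆ {s, p, t} :=
      (support_mul_le σ x).trans (union_subset hsupp (support_subset_of_mem_triangleSwaps hx))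
    have hσx : (σ * x).IsSwap := isSwap_of_sign_eq_neg_one
      (by rw [Perm.sign_mul, hsign, (hT x (htri hx)).sign_eq, one_mul])
      ((card_le_card hσx_supp).trans card_le_three)
    exact ⟨htri hx, htri (mem_triangleSwaps_of_isSwap hσx hσx_supp)⟩

end Triangle

section Cayley

variable {n : ℕ} {T : Set (Perm (Fin n))}

theorem cayley_adj_iff (hT : ∀ x ∈ T, x.IsSwap) {g h : Perm (Fin n)} :
    (cayley T).Adj g h ↔ g⁻¹ * h ∈ T := by
  rw [cayley, SimpleGraph.fromRel_adj]
  constructor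
  · rintro ⟨-, ⟨x, hx, rfl⟩ | ⟨x, hx, rfl⟩⟩
    · rwa [inv_mul_cancel_left]
    · rwa [mul_inv_rev, inv_mul_cancel_right, (hT x hx).inv_eq]
  · intro h'
    refine ⟨fun hgh => ?_, Or.inl ⟨_, h', (mul_inv_cancel_left g h).symm⟩⟩
    obtain ⟨i, j, hij, hswap⟩ := hT _ h'
    rw [hgh, inv_mul_cancel, eq_comm, swap_eq_one_iff] at hswap
    exact hij hswap

theorem cayley_neighborSet (hT : ∀ x ∈ T, x.IsSwap) (g : Perm (Fin n)) :
    (cayley T).neighborSet g = g • T := by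
  ext w
  rw [SimpleGraph.mem_neighborSet, cayley_adj_iff hT, Set.mem_smul_set_iff_inv_smul_mem,
    smul_eq_mul]

theorem mul_mem_cayley_neighborSet (hT : ∀ x ∈ T, x.IsSwap) {x : Perm (Fin n)} (hx : x ∈ T)
    (g : Perm (Fin n)) : g * x ∈ (cayley T).neighborSet g := by
  rwa [SimpleGraph.mem_neighborSet, cayley_adj_iff hT, inv_mul_cancel_left]

theorem mem_cayley_neighborSet_mul (hT : ∀ x ∈ T, x.IsSwap) {x : Perm (Fin n)} (hx : x ∈ T)
    (g : Perm (Fin n)) : g ∈ (cayley T).neighborSet (g * x) := by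
  rwa [SimpleGraph.mem_neighborSet, cayley_adj_iff hT, mul_inv_rev, inv_mul_cancel_right,
    (hT x hx).inv_eq]

theorem ncard_cayley_neighborSet (hT : ∀ x ∈ T, x.IsSwap) (g : Perm (Fin n)) :
    ((cayley T).neighborSet g).ncard = T.ncard := by
  rw [cayley_neighborSet hT, Set.ncard_smul_set]

theorem ncard_cayley_neighborSet_union_le (hT : ∀ x ∈ T, x.IsSwap) (g h : Perm (Fin n)) :
    ((cayley T).neighborSet g ∪ (cayley T).neighborSet h).ncard ≤ 2 * T.ncard :=
  (Set.ncard_union_le _ _).trans_eq (by rw [ncard_cayley_neighborSet hT,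
    ncard_cayley_neighborSet hT, two_mul])

theorem sign_eq_neg_of_mem_cayley_neighborSet (hT : ∀ x ∈ T, x.IsSwap) {g w : Perm (Fin n)}
    (hw : w ∈ (cayley T).neighborSet g) : sign w = -sign g := by
  rw [SimpleGraph.mem_neighborSet, cayley_adj_iff hT] at hw
  have h := (hT _ hw).sign_eq
  rw [Perm.sign_mul, sign_inv] at h
  calc sign w = sign g * (sign g * sign w) := by rw [← mul_assoc, Int.units_mul_self, one_mul]
    _ = -sign g := by rw [h, mul_neg_one]

theorem cayley_neighborSet_inter (hT : ∀ x ∈ T, x.IsSwap) (g h : Perm (Fin n)) :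
    (cayley T).neighborSet g ∩ (cayley T).neighborSet h =
      g • {x ∈ T | h⁻¹ * g * x ∈ T} := by
  ext w
  simp only [Set.mem_inter_iff, cayley_neighborSet hT, Set.mem_smul_set_iff_inv_smul_mem,
    smul_eq_mul, Set.mem_ofPred_eq, mul_assoc, mul_inv_cancel_left]

theorem ncard_cayley_neighborSet_inter_eq_three (hT : ∀ x ∈ T, x.IsSwap) {s p t : Fin n}
    (hsp : s ≠ p) (hpt : p ≠ t) (hst : s ≠ t) (htri : triangleSwaps s p t ⊆ T)
    {x y : Perm (Fin n)} (hx : x ∈ triangleSwaps s p t)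
    (hy : y ∈ triangleSwaps s p t) (hxy : x ≠ y) (g : Perm (Fin n)) :
    ((cayley T).neighborSet g ∩ (cayley T).neighborSet (g * x * y)).ncard = 3 := by
  have hx' := hT x (htri hx)
  have hy' := hT y (htri hy)
  have hσ : (g * x * y)⁻¹ * g = y * x := by
    rw [mul_inv_rev, mul_inv_rev, hx'.inv_eq, hy'.inv_eq]; group
  rw [cayley_neighborSet_inter hT, Set.ncard_smul_set, hσ,
    setOf_mem_mul_mem_eq_triangleSwaps hT htri, ncard_triangleSwaps hsp hpt hst]
  · exact fun h => hxy (by rw [mul_eq_one_iff_eq_inv.1 h, hx'.inv_eq])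
  · rw [Perm.sign_mul, hx'.sign_eq, hy'.sign_eq]; rfl
  · exact support_mul_subset_of_mem_triangleSwaps hy hx

theorem ncard_cayley_neighborSet_union_eq (hT : ∀ x ∈ T, x.IsSwap) {s p t : Fin n}
    (hsp : s ≠ p) (hpt : p ≠ t) (hst : s ≠ t) (htri : triangleSwaps s p t ⊆ T)
    {x y : Perm (Fin n)} (hx : x ∈ triangleSwaps s p t) (hy : y ∈ triangleSwaps s p t)
    (hxy : x ≠ y) (g : Perm (Fin n)) :
    ((cayley T).neighborSet g ∪ (cayley T).neighborSet (g * x * y)).ncard = 2 * T.ncard - 3 := by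
  have h := Set.ncard_union_add_ncard_inter ((cayley T).neighborSet g)
    ((cayley T).neighborSet (g * x * y))
  rw [ncard_cayley_neighborSet_inter_eq_three hT hsp hpt hst htri hx hy hxy,
    ncard_cayley_neighborSet hT, ncard_cayley_neighborSet hT] at h
  omega

theorem ncard_cayley_neighborSet_inter_union_le_five (hT : ∀ x ∈ T, x.IsSwap)
    {v g τ : Perm (Fin n)} (hvg : v ≠ g) (hvgτ : v ≠ g * τ) (hτ : #τ.support ≤ 3) :
    ((cayley T).neighborSet v ∩
      ((cayley T).neighborSet g ∪ (cayley T).neighborSet (g * τ))).ncard ≤ 5 := by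
  rw [Set.inter_union_distrib_left, cayley_neighborSet_inter hT, cayley_neighborSet_inter hT,
    ← Set.smul_set_union, Set.ncard_smul_set]
  refine (Set.ncard_le_ncard (Set.union_subset_union
    (setOf_mem_mul_mem_subset_rightSwapFactors hT _)
    (setOf_mem_mul_mem_subset_rightSwapFactors hT _))).trans
    (ncard_rightSwapFactors_union_le_five ?_ ?_ ?_)
  · exact fun h => hvg (inv_mul_eq_one.1 h).symm
  · exact fun h => hvgτ (inv_mul_eq_one.1 h).symm
  · have : (g * τ)⁻¹ * v * (g⁻¹ * v)⁻¹ = τ⁻¹ := by group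
    rwa [this, support_inv]

end Cayley

namespace SimpleGraph

variable {V : Type*} (G : SimpleGraph V)

/-- The neighbourhood `N(S)` of a vertex set `S` in the paper. -/
def outerBoundary (S : Set V) : Set V :=
  {w | w ∉ S ∧ ∃ x ∈ S, G.Adj x w}

theorem not_connected_induce_compl_outerBoundary {S : Set V} {x z : V} (hx : x ∈ S)
    (hz : z ∉ S) (hzF : z ∉ G.outerBoundary S) :
    ¬(G.induce (G.outerBoundary S)ᶜ).Connected := by
  intro hconn
  obtain ⟨w⟩ := hconn.preconnected ⟨x, fun h => h.1 hx⟩ ⟨z, hzF⟩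
  obtain ⟨d, -, hd₁, hd₂⟩ := w.exists_boundary_dart {y | y.1 ∈ S} hx hz
  exact d.snd.2 ⟨hd₂, d.fst.1, hd₁, d.adj⟩

theorem two_le_ncard_adj_of_adj_of_adj [Finite V] {F : Set V} {v w w' : V} (hww' : w ≠ w')
    (hw : w ∉ F) (hw' : w' ∉ F) (h : G.Adj v w) (h' : G.Adj v w') :
    2 ≤ {x | x ∉ F ∧ G.Adj v x}.ncard := by
  rw [← Set.ncard_pair hww']
  exact Set.ncard_le_ncard (Set.pair_subset ⟨hw, h⟩ ⟨hw', h'⟩)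

theorem card_edgeFinset_eq_sum_card_lt [Fintype V] [DecidableRel G.Adj] {N : ℕ}
    (e : Fin N ≃ V) :
    #G.edgeFinset = ∑ i, #{j | j < i ∧ G.Adj (e i) (e j)} := by
  have h : #G.edgeFinset = #{q : Fin N × Fin N | q.2 < q.1 ∧ G.Adj (e q.1) (e q.2)} := by
    symm
    refine card_bij (fun q _ => s(e q.1, e q.2)) (fun q hq => ?_) (fun q hq q' hq' hqq' => ?_)
      (fun z hz => ?_)
    · exact mem_edgeFinset.2 (mem_filter.1 hq).2.2
    · rw [mem_filter] at hq hq'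
      rcases Sym2.eq_iff.1 hqq' with ⟨h₁, h₂⟩ | ⟨h₁, h₂⟩
      · exact Prod.ext (e.injective h₁) (e.injective h₂)
      · rw [e.injective h₁, e.injective h₂] at hq
        exact absurd (hq.2.1.trans hq'.2.1) (lt_irrefl _)
    · induction z using Sym2.ind with
      | h a b =>
        have hab := mem_edgeFinset.1 hz
        rcases lt_or_gt_of_ne (e.symm.injective.ne hab.ne) with hlt | hlt
        · exact ⟨(e.symm b, e.symm a),
            mem_filter.2 ⟨mem_univ _, hlt, by simpa using hab.symm⟩,
            by simp [Sym2.eq_swap]⟩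
        · exact ⟨(e.symm a, e.symm b), mem_filter.2 ⟨mem_univ _, hlt, by simpa using hab⟩,
            by simp⟩
  rw [h, card_filter, Fintype.sum_prod_type]
  simp only [card_filter]

end SimpleGraph

theorem Nat.sum_range_min_eq {k N : ℕ} (h : k + 1 ≤ N) :
    ∑ i ∈ range N, min i k = k * N - k * (k + 1) / 2 := by
  induction N, h using Nat.le_induction with
  | base =>
    rw [sum_congr rfl fun i hi => min_eq_left (Nat.lt_succ_iff.1 (mem_range.1 hi)),
      sum_range_id, Nat.succ_eq_add_one]
    obtain ⟨r, hr⟩ := Nat.even_mul_succ_self k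
    have : (k + 1) * (k + 1 - 1) = k * (k + 1) := by rw [Nat.add_sub_cancel, mul_comm]
    omega
  | succ N hN ih =>
    have : k * (k + 1) ≤ k * N := Nat.mul_le_mul_left k hN
    have : k * (N + 1) = k * N + k := by ring
    rw [sum_range_succ, ih, min_eq_right (by omega)]
    omega

theorem IsKTree.ncard_edgeSet {k : ℕ} {V : Type*} [Fintype V] {G : SimpleGraph V}
    (hG : IsKTree k G) : G.edgeSet.ncard = k * Fintype.card V - k * (k + 1) / 2 := by
  classical
  obtain ⟨hk, e, hclique, hlater⟩ := hG
  rw [← SimpleGraph.coe_edgeFinset, Set.ncard_coe_finset, G.card_edgeFinset_eq_sum_card_lt e,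
    ← Nat.sum_range_min_eq hk, ← Fin.sum_univ_eq_sum_range]
  refine sum_congr rfl fun i _ => ?_
  rcases le_or_gt (i : ℕ) k with hi | hi
  · rw [min_eq_left hi, filter_congr fun j _ => and_iff_left_of_imp fun hj => hclique i j hj hi,
      filter_gt_eq_Iio, Fin.card_Iio]
  · rw [min_eq_right hi.le, ← (hlater i hi).1, Set.ncard_eq_toFinset_card', Set.toFinset_ofPred]

theorem transGraph_adj {n : ℕ} {T : Set (Perm (Fin n))} {i j : Fin n} :
    (transGraph T).Adj i j ↔ i ≠ j ∧ swap i j ∈ T := by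
  rw [transGraph, SimpleGraph.fromRel_adj, swap_comm j i, or_self]

theorem Sym2.eq_of_swap_eq_swap {α : Type*} [DecidableEq α] {i j k l : α} (hij : i ≠ j)
    (h : swap i j = swap k l) : s(i, j) = s(k, l) := by
  have hi : swap k l i = j := by rw [← h, swap_apply_left]
  rcases eq_or_ne i k with rfl | hik
  · rw [swap_apply_left] at hi
    rw [hi]
  rcases eq_or_ne i l with rfl | hil
  · rw [swap_apply_right] at hi
    rw [hi, Sym2.eq_swap]
  · rw [swap_apply_of_ne_of_ne hik hil] at hi
    exact absurd hi hij

theorem ncard_eq_ncard_edgeSet_transGraph {n : ℕ} {T : Set (Perm (Fin n))}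
    (hT : ∀ x ∈ T, x.IsSwap) : T.ncard = (transGraph T).edgeSet.ncard := by
  symm
  refine Set.ncard_congr (fun z _ => Sym2.lift ⟨fun i j => swap i j, swap_comm⟩ z)
    (fun z hz => ?_) (fun z z' hz _ hzz' => ?_) (fun x hx => ?_)
  · induction z using Sym2.ind with
    | h i j => exact (transGraph_adj.1 hz).2
  · induction z using Sym2.ind with
    | h i j =>
      induction z' using Sym2.ind with
      | h k l => exact Sym2.eq_of_swap_eq_swap (transGraph_adj.1 hz).1 hzz'
  · obtain ⟨i, j, hij, rfl⟩ := hT x hx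
    exact ⟨s(i, j), transGraph_adj.2 ⟨hij, hx⟩, rfl⟩

theorem Nat.seven_le_mul_sub_mul_succ_div_two {n k : ℕ} (hn : 5 ≤ n) (hk : 2 ≤ k)
    (hkn : k + 1 ≤ n) :
    7 ≤ k * n - k * (k + 1) / 2 := by
  obtain ⟨r, hr⟩ := Nat.even_mul_succ_self k
  have : 14 + k * (k + 1) ≤ 2 * (k * n) := by nlinarith
  omega

theorem Nat.four_mul_mul_self_lt_factorial {n : ℕ} (hn : 5 ≤ n) :
    4 * (n * n) < n.factorial := by
  induction n, hn using Nat.le_induction with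
  | base => decide
  | succ n hn ih =>
    rw [Nat.factorial_succ]
    nlinarith

section TypeBCycle

variable {n : ℕ} {T : Set (Perm (Fin n))} {s p t : Fin n}

def typeBCycle (u : Perm (Fin n)) (s p t : Fin n) : Set (Perm (Fin n)) :=
  {u, u * swap s p, u * swap s p * swap p t, u * swap s t}

def typeBCycleNbhdEven (T : Set (Perm (Fin n))) (u : Perm (Fin n)) (s p t : Fin n) :
    Set (Perm (Fin n)) :=
  (cayley T).neighborSet u ∪ (cayley T).neighborSet (u * swap s p * swap p t)

def typeBCycleNbhdOdd (T : Set (Perm (Fin n))) (u : Perm (Fin n)) (s p t : Fin n) :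
    Set (Perm (Fin n)) :=
  (cayley T).neighborSet (u * swap s p) ∪ (cayley T).neighborSet (u * swap s t)

theorem outerBoundary_typeBCycle (u : Perm (Fin n)) :
    (cayley T).outerBoundary (typeBCycle u s p t) =
      (typeBCycleNbhdEven T u s p t ∪ typeBCycleNbhdOdd T u s p t) \ typeBCycle u s p t := by
  ext w
  simp only [SimpleGraph.outerBoundary, typeBCycle, typeBCycleNbhdEven, typeBCycleNbhdOdd,
    Set.mem_sdiff, Set.mem_union, SimpleGraph.mem_neighborSet, Set.mem_insert_iff,
    Set.mem_singleton_iff, Set.mem_ofPred_eq, exists_eq_or_imp, exists_eq_left]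
  tauto

theorem sign_eq_neg_of_mem_typeBCycleNbhdEven (hT : ∀ x ∈ T, x.IsSwap) (hsp : s ≠ p)
    (hpt : p ≠ t) {u w : Perm (Fin n)} (hw : w ∈ typeBCycleNbhdEven T u s p t) :
    sign w = -sign u := by
  rcases hw with h | h <;>
    simp [sign_eq_neg_of_mem_cayley_neighborSet hT h, Perm.sign_mul, sign_swap hsp, sign_swap hpt]

theorem sign_eq_of_mem_typeBCycleNbhdOdd (hT : ∀ x ∈ T, x.IsSwap) (hsp : s ≠ p)
    (hst : s ≠ t) {u w : Perm (Fin n)} (hw : w ∈ typeBCycleNbhdOdd T u s p t) :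
    sign w = sign u := by
  rcases hw with h | h <;>
    simp [sign_eq_neg_of_mem_cayley_neighborSet hT h, Perm.sign_mul, sign_swap hsp, sign_swap hst]

theorem disjoint_typeBCycleNbhdEven_typeBCycleNbhdOdd (hT : ∀ x ∈ T, x.IsSwap) (hsp : s ≠ p)
    (hpt : p ≠ t) (hst : s ≠ t) (u : Perm (Fin n)) :
    Disjoint (typeBCycleNbhdEven T u s p t) (typeBCycleNbhdOdd T u s p t) :=
  Set.disjoint_left.2 fun _ hwE hwO => units_ne_neg_self _
    ((sign_eq_of_mem_typeBCycleNbhdOdd hT hsp hst hwO).symm.trans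
      (sign_eq_neg_of_mem_typeBCycleNbhdEven hT hsp hpt hwE))

theorem typeBCycle_subset_union (hT : ∀ x ∈ T, x.IsSwap) (htri : triangleSwaps s p t ⊆ T)
    (u : Perm (Fin n)) :
    typeBCycle u s p t ⊆ typeBCycleNbhdEven T u s p t ∪ typeBCycleNbhdOdd T u s p t := by
  have ha : swap s p ∈ T := htri (by simp [triangleSwaps])
  have hb : swap p t ∈ T := htri (by simp [triangleSwaps])
  have hc : swap s t ∈ T := htri (by simp [triangleSwaps])
  rintro w (rfl | rfl | rfl | rfl)
  · exact Or.inr (Or.inl (mem_cayley_neighborSet_mul hT ha w))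
  · exact Or.inl (Or.inl (mul_mem_cayley_neighborSet hT ha u))
  · exact Or.inr (Or.inl (mul_mem_cayley_neighborSet hT hb _))
  · exact Or.inl (Or.inl (mul_mem_cayley_neighborSet hT hc u))

theorem ncard_typeBCycle (hsp : s ≠ p) (hpt : p ≠ t) (hst : s ≠ t) (u : Perm (Fin n)) :
    (typeBCycle u s p t).ncard = 4 := by
  have hab := swap_mul_swap_ne_one (p := p) hst
  have hac : swap s p ≠ swap s t := swap_ne_swap_of_ne hpt
  have habc : swap s p * swap p t ≠ swap s t := fun h => by
    simpa [Perm.sign_mul, sign_swap hsp, sign_swap hpt, sign_swap hst] using congr(sign $h)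
  rw [typeBCycle, Set.ncard_insert_of_notMem, Set.ncard_insert_of_notMem, Set.ncard_pair] <;>
    simp [mul_assoc, hsp, hpt, hst, hab, hac, habc, swap_eq_one_iff]

theorem ncard_outerBoundary_typeBCycle (hT : ∀ x ∈ T, x.IsSwap) (hsp : s ≠ p) (hpt : p ≠ t)
    (hst : s ≠ t) (htri : triangleSwaps s p t ⊆ T) (u : Perm (Fin n)) :
    ((cayley T).outerBoundary (typeBCycle u s p t)).ncard = 4 * T.ncard - 10 := by
  have ha : swap s p ∈ triangleSwaps s p t := by simp [triangleSwaps]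
  have hb : swap p t ∈ triangleSwaps s p t := by simp [triangleSwaps]
  have hc : swap s t ∈ triangleSwaps s p t := by simp [triangleSwaps]
  have hE := ncard_cayley_neighborSet_union_eq hT hsp hpt hst htri ha hb
    (by rw [swap_comm s p]; exact swap_ne_swap_of_ne hst) u
  have hO := ncard_cayley_neighborSet_union_eq hT hsp hpt hst htri ha hc
    (swap_ne_swap_of_ne hpt) (u * swap s p)
  rw [mul_assoc u, swap_mul_self, mul_one] at hO
  have h3 : 3 ≤ T.ncard := ncard_triangleSwaps hsp hpt hst ▸ Set.ncard_le_ncard htri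
  rw [outerBoundary_typeBCycle, Set.ncard_sdiff (typeBCycle_subset_union hT htri u),
    Set.ncard_union_eq (disjoint_typeBCycleNbhdEven_typeBCycleNbhdOdd hT hsp hpt hst u),
    typeBCycleNbhdEven, typeBCycleNbhdOdd, hE, hO,
    ncard_typeBCycle hsp hpt hst]
  omega

theorem not_connected_induce_compl_outerBoundary_typeBCycle (hT : ∀ x ∈ T, x.IsSwap)
    (htri : triangleSwaps s p t ⊆ T) (hlt : 4 * T.ncard < n.factorial) (u : Perm (Fin n)) :
    ¬((cayley T).induce ((cayley T).outerBoundary (typeBCycle u s p t))ᶜ).Connected := by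
  have hE : (typeBCycleNbhdEven T u s p t).ncard ≤ 2 * T.ncard :=
    ncard_cayley_neighborSet_union_le hT _ _
  have hO : (typeBCycleNbhdOdd T u s p t).ncard ≤ 2 * T.ncard :=
    ncard_cayley_neighborSet_union_le hT _ _
  have hcard : (typeBCycleNbhdEven T u s p t ∪ typeBCycleNbhdOdd T u s p t).ncard <
      (Set.univ : Set (Perm (Fin n))).ncard := by
    rw [Set.ncard_univ, Nat.card_perm, Nat.card_eq_fintype_card, Fintype.card_fin]
    have := Set.ncard_union_le (typeBCycleNbhdEven T u s p t) (typeBCycleNbhdOdd T u s p t)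
    omega
  obtain ⟨z, -, hz⟩ := Set.exists_mem_notMem_of_ncard_lt_ncard hcard
  refine (cayley T).not_connected_induce_compl_outerBoundary (x := u) (Set.mem_insert _ _)
    (fun h => hz (typeBCycle_subset_union hT htri u h)) fun h => hz ?_
  rw [outerBoundary_typeBCycle] at h
  exact h.1

theorem ncard_cayley_neighborSet_inter_le_five_of_notMem_typeBCycle (hT : ∀ x ∈ T, x.IsSwap)
    (hsp : s ≠ p) (hpt : p ≠ t) (hst : s ≠ t)
    {u v : Perm (Fin n)} (hv : v ∉ typeBCycle u s p t) :
    ((cayley T).neighborSet v ∩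
      (typeBCycleNbhdEven T u s p t ∪ typeBCycleNbhdOdd T u s p t)).ncard ≤ 5 := by
  simp only [typeBCycle, Set.mem_insert_iff, Set.mem_singleton_iff, not_or] at hv
  obtain ⟨hvu, hva, hvab, hvc⟩ := hv
  have ha : swap s p ∈ triangleSwaps s p t := by simp [triangleSwaps]
  have hb : swap p t ∈ triangleSwaps s p t := by simp [triangleSwaps]
  have hc : swap s t ∈ triangleSwaps s p t := by simp [triangleSwaps]
  have hsupp {x y : Perm (Fin n)} (hx : x ∈ triangleSwaps s p t)
      (hy : y ∈ triangleSwaps s p t) : #(x * y).support ≤ 3 :=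
    (card_le_card (support_mul_subset_of_mem_triangleSwaps hx hy)).trans card_le_three
  have hsign : sign v = sign u ∨ sign v = -sign u := by
    rcases Int.units_eq_one_or (sign v) with h | h <;>
      rcases Int.units_eq_one_or (sign u) with h' | h' <;> simp [h, h']
  -- the neighbours of `v` all have sign `-sign v`, so they meet only one of the two halves
  rw [Set.inter_union_distrib_left]
  rcases hsign with hsign | hsign
  · have hdisj : Disjoint ((cayley T).neighborSet v) (typeBCycleNbhdOdd T u s p t) :=
      Set.disjoint_left.2 fun w hwv hwO => by
        have := sign_eq_of_mem_typeBCycleNbhdOdd hT hsp hst hwO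
        rw [sign_eq_neg_of_mem_cayley_neighborSet hT hwv, hsign] at this
        exact units_ne_neg_self _ this.symm
    have h5 := ncard_cayley_neighborSet_inter_union_le_five (T := T) hT hvu
      (by rwa [← mul_assoc]) (hsupp ha hb)
    rw [← mul_assoc] at h5
    rwa [hdisj.inter_eq, Set.union_empty]
  · have hdisj : Disjoint ((cayley T).neighborSet v) (typeBCycleNbhdEven T u s p t) :=
      Set.disjoint_left.2 fun w hwv hwE => by
        have := sign_eq_neg_of_mem_typeBCycleNbhdEven hT hsp hpt hwE
        rw [sign_eq_neg_of_mem_cayley_neighborSet hT hwv, hsign, neg_neg] at this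
        exact units_ne_neg_self _ this
    have hac : u * swap s p * (swap s p * swap s t) = u * swap s t := by
      rw [← mul_assoc, mul_assoc u, swap_mul_self, mul_one]
    have h5 := ncard_cayley_neighborSet_inter_union_le_five (T := T) hT hva
      (by rwa [hac]) (hsupp ha hc)
    rw [hac] at h5
    rwa [hdisj.inter_eq, Set.empty_union]

theorem two_le_ncard_adj_notMem_outerBoundary_typeBCycle (hT : ∀ x ∈ T, x.IsSwap)
    (hsp : s ≠ p) (hpt : p ≠ t) (hst : s ≠ t) (htri : triangleSwaps s p t ⊆ T)
    (h7 : 7 ≤ T.ncard) (u v : Perm (Fin n)) :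
    2 ≤ {w | w ∉ (cayley T).outerBoundary (typeBCycle u s p t) ∧
      (cayley T).Adj v w}.ncard := by
  by_cases hvC : v ∈ typeBCycle u s p t
  · have hC : ∀ w ∈ typeBCycle u s p t, w ∉ (cayley T).outerBoundary (typeBCycle u s p t) :=
      fun w hw h => h.1 hw
    have ha : swap s p ∈ T := htri (by simp [triangleSwaps])
    have hb : swap p t ∈ T := htri (by simp [triangleSwaps])
    have hc : swap s t ∈ T := htri (by simp [triangleSwaps])
    have hu_uab : u ≠ u * swap s p * swap p t := by
      rw [mul_assoc]; exact fun h => swap_mul_swap_ne_one hst (mul_eq_left.1 h.symm)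
    have hua_uc : u * swap s p ≠ u * swap s t :=
      fun h => swap_ne_swap_of_ne hpt (mul_left_cancel h)
    have huab_uc : u * swap s p * swap p t * swap s p = u * swap s t := by
      rw [← swap_mul_swap_mul_swap_eq hpt hst]; simp only [mul_assoc]
    rcases hvC with rfl | rfl | rfl | rfl
    · exact SimpleGraph.two_le_ncard_adj_of_adj_of_adj _ hua_uc (hC _ (by simp [typeBCycle]))
        (hC _ (by simp [typeBCycle])) (mul_mem_cayley_neighborSet hT ha v)
        (mul_mem_cayley_neighborSet hT hc v)
    · exact SimpleGraph.two_le_ncard_adj_of_adj_of_adj _ hu_uab (hC _ (by simp [typeBCycle]))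
        (hC _ (by simp [typeBCycle])) (mem_cayley_neighborSet_mul hT ha u)
        (mul_mem_cayley_neighborSet hT hb _)
    · refine SimpleGraph.two_le_ncard_adj_of_adj_of_adj _ hua_uc (hC _ (by simp [typeBCycle]))
        (hC _ (by simp [typeBCycle])) (mem_cayley_neighborSet_mul hT hb _) ?_
      rw [← huab_uc]
      exact mul_mem_cayley_neighborSet hT ha _
    · refine SimpleGraph.two_le_ncard_adj_of_adj_of_adj _ hu_uab (hC _ (by simp [typeBCycle]))
        (hC _ (by simp [typeBCycle])) (mem_cayley_neighborSet_mul hT hc u) ?_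
      rw [← huab_uc]
      exact mem_cayley_neighborSet_mul hT ha _
  · have h5 := ncard_cayley_neighborSet_inter_le_five_of_notMem_typeBCycle hT hsp hpt hst hvC
    have hsplit := Set.ncard_inter_add_ncard_sdiff_eq_ncard ((cayley T).neighborSet v)
      (typeBCycleNbhdEven T u s p t ∪ typeBCycleNbhdOdd T u s p t)
    rw [ncard_cayley_neighborSet hT] at hsplit
    refine le_trans ?_ (Set.ncard_le_ncard (s := (cayley T).neighborSet v \
      (typeBCycleNbhdEven T u s p t ∪ typeBCycleNbhdOdd T u s p t))
      fun w hw => ⟨fun hF => hw.2 ?_, hw.1⟩)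
    · omega
    · rw [outerBoundary_typeBCycle] at hF
      exact hF.1

end TypeBCycle

theorem stmt13_general (n k : ℕ) (hn : 5 ≤ n) (hk2 : 2 ≤ k)
    (T : Set (Equiv.Perm (Fin n))) (hT : ∀ t ∈ T, Equiv.Perm.IsSwap t)
    (hkt : IsKTree k (transGraph T))
    (s p t : Fin n)
    (hsp : (transGraph T).Adj s p) (hpt : (transGraph T).Adj p t)
    (hst : (transGraph T).Adj s t)
    (u : Equiv.Perm (Fin n)) :
    {w : Equiv.Perm (Fin n) |
        w ∉ ({u, u * Equiv.swap s p, u * Equiv.swap s p * Equiv.swap p t,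
              u * Equiv.swap s t} : Set (Equiv.Perm (Fin n))) ∧
        ∃ x ∈ ({u, u * Equiv.swap s p, u * Equiv.swap s p * Equiv.swap p t,
              u * Equiv.swap s t} : Set (Equiv.Perm (Fin n))),
          (cayley T).Adj x w}.ncard = 4 * (k * n - k * (k + 1) / 2) - 10 ∧
    IsRkCut (cayley T) 2
      {w : Equiv.Perm (Fin n) |
        w ∉ ({u, u * Equiv.swap s p, u * Equiv.swap s p * Equiv.swap p t,
              u * Equiv.swap s t} : Set (Equiv.Perm (Fin n))) ∧
        ∃ x ∈ ({u, u * Equiv.swap s p, u * Equiv.swap s p * Equiv.swap p t,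
              u * Equiv.swap s t} : Set (Equiv.Perm (Fin n))),
          (cayley T).Adj x w} := by
  obtain ⟨hsp, hspT⟩ := transGraph_adj.1 hsp
  obtain ⟨hpt, hptT⟩ := transGraph_adj.1 hpt
  obtain ⟨hst, hstT⟩ := transGraph_adj.1 hst
  have htri : triangleSwaps s p t ⊆ T := by rintro x (rfl | rfl | rfl) <;> assumption
  have hm : T.ncard = k * n - k * (k + 1) / 2 := by
    rw [ncard_eq_ncard_edgeSet_transGraph hT, hkt.ncard_edgeSet, Fintype.card_fin]
  have hkn : k + 1 ≤ n := by simpa using hkt.1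
  have h7 : 7 ≤ T.ncard := hm ▸ Nat.seven_le_mul_sub_mul_succ_div_two hn hk2 hkn
  have hlt : 4 * T.ncard < n.factorial := by
    have : T.ncard ≤ n * n := hm ▸ (Nat.sub_le _ _).trans (Nat.mul_le_mul_right n (by omega))
    have := Nat.four_mul_mul_self_lt_factorial hn
    omega
  exact ⟨hm ▸ ncard_outerBoundary_typeBCycle hT hsp hpt hst htri u,
    not_connected_induce_compl_outerBoundary_typeBCycle hT htri hlt u,
    fun v _ => two_le_ncard_adj_notMem_outerBoundary_typeBCycle hT hsp hpt hst htri h7 u v⟩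

/-- For `n ≥ 5`, `2 ≤ k ≤ n-1`, a triangle `s p t` in the `k`-tree `G(𝒯)` and a vertex
`u` of `T_kG_n`, the neighborhood `F = N(C)` of the Type B 4-cycle `C` with vertex set
`{u, u(sp), u(sp)(pt), u(st)}` has cardinality exactly `4(kn - k(k+1)/2) - 10`, and `F`
is an `R_2`-vertex-cut of `T_kG_n`. -/
theorem stmt13 (n k : ℕ) (hn : 5 ≤ n) (hk2 : 2 ≤ k) (hkn : k ≤ n - 1)
    (T : Set (Equiv.Perm (Fin n))) (hT : ∀ t ∈ T, Equiv.Perm.IsSwap t)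
    (hkt : IsKTree k (transGraph T))
    (s p t : Fin n)
    (hsp : (transGraph T).Adj s p) (hpt : (transGraph T).Adj p t)
    (hst : (transGraph T).Adj s t)
    (u : Equiv.Perm (Fin n)) :
    {w : Equiv.Perm (Fin n) |
        w ∉ ({u, u * Equiv.swap s p, u * Equiv.swap s p * Equiv.swap p t,
              u * Equiv.swap s t} : Set (Equiv.Perm (Fin n))) ∧
        ∃ x ∈ ({u, u * Equiv.swap s p, u * Equiv.swap s p * Equiv.swap p t,
              u * Equiv.swap s t} : Set (Equiv.Perm (Fin n))),
          (cayley T).Adj x w}.ncard = 4 * (k * n - k * (k + 1) / 2) - 10 ∧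
    IsRkCut (cayley T) 2
      {w : Equiv.Perm (Fin n) |
        w ∉ ({u, u * Equiv.swap s p, u * Equiv.swap s p * Equiv.swap p t,
              u * Equiv.swap s t} : Set (Equiv.Perm (Fin n))) ∧
        ∃ x ∈ ({u, u * Equiv.swap s p, u * Equiv.swap s p * Equiv.swap p t,
              u * Equiv.swap s t} : Set (Equiv.Perm (Fin n))),
          (cayley T).Adj x w} :=
  stmt13_general n k hn hk2 T hT hkt s p t hsp hpt hst u
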